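/- arXiv:2205.05274 — 2 statements merged into one kernel-verified Lean document; each statement's English description precedes it below -/
import Mathlib

section
/- Let G be a connected finite simple graph with at least 3 vertices and let F_n be the fan graph obtained by joining a single vertex to every vertex of the path P_n, where n ≥ 3. Then γ_{P,c}(G □ F_n) ≤ 2·γ_c(G). -/
/-!
Let `D` be a minimum connected dominating set of `G` and `T` the apex of `F_n` together with
an end vertex of its path; `T` is a connected zero forcing set of `F_n`. As `D` dominates `G`,
the set `D × T` monitors every fibre `G × {t}` with `t ∈ T`, and each force `v → w` of the zero
forcing process in `F_n` lifts to the forces `(g, v) → (g, w)` in `G □ F_n`. So `D × T` is a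
power dominating set; it induces the connected graph `G[D] □ F_n[T]` and has `2 |D|` vertices.
More generally `γ_{P,c}(G □ H) ≤ γ_c(G) · |T|` for any connected zero forcing set `T` of `H`.
-/

open SimpleGraph

variable {V : Type*} {α β : Type*}

/-- The monitored set `M(S)`: least set containing the closed neighborhood of `S`
and closed under the propagation rule (a monitored vertex all of whose neighbors,
except possibly one, are monitored forces that remaining neighbor). -/
inductive Monitored (G : SimpleGraph V) (S : Set V) : V → Prop
  | mem : ∀ {v}, v ∈ S → Monitored G S v
  | dom : ∀ {v w}, v ∈ S → G.Adj v w → Monitored G S w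
  | prop : ∀ {v w}, Monitored G S v → G.Adj v w →
      (∀ u, G.Adj v u → u ≠ w → Monitored G S u) → Monitored G S w

/-- `S` is a power dominating set of `G`. -/
def IsPDS (G : SimpleGraph V) (S : Set V) : Prop := ∀ v, Monitored G S v

/-- `S` is a connected power dominating set of `G`. -/
def IsCPDS (G : SimpleGraph V) (S : Set V) : Prop :=
  IsPDS G S ∧ (G.induce S).Connected

/-- The connected power domination number `γ_{P,c}(G)`. -/
noncomputable def cpdn (G : SimpleGraph V) : ℕ :=
  sInf {n | ∃ S : Finset V, S.card = n ∧ IsCPDS G (S : Set V)}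

/-- Zero-forcing: least set containing `Z` closed under the color-change rule. -/
inductive Forced (G : SimpleGraph V) (Z : Set V) : V → Prop
  | mem : ∀ {v}, v ∈ Z → Forced G Z v
  | force : ∀ {v w}, Forced G Z v → G.Adj v w →
      (∀ u, G.Adj v u → u ≠ w → Forced G Z u) → Forced G Z w

/-- `Z` is a zero forcing set of `G`. -/
def IsZFS (G : SimpleGraph V) (Z : Set V) : Prop := ∀ v, Forced G Z v

/-- `Z` is a connected zero forcing set of `G`. -/
def IsCZFS (G : SimpleGraph V) (Z : Set V) : Prop :=
  IsZFS G Z ∧ (G.induce Z).Connected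

/-- The connected zero forcing number `Z_c(G)`. -/
noncomputable def czfn (G : SimpleGraph V) : ℕ :=
  sInf {n | ∃ Z : Finset V, Z.card = n ∧ IsCZFS G (Z : Set V)}

/-- `S` is a dominating set of `G`: `N[S] = V(G)`. -/
def IsDomSet (G : SimpleGraph V) (S : Set V) : Prop :=
  ∀ v, ∃ u ∈ S, u = v ∨ G.Adj u v

/-- `S` is a connected dominating set of `G`. -/
def IsCDS (G : SimpleGraph V) (S : Set V) : Prop :=
  IsDomSet G S ∧ (G.induce S).Connected

/-- The domination number `γ(G)`. -/
noncomputable def domNum (G : SimpleGraph V) : ℕ :=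
  sInf {n | ∃ S : Finset V, S.card = n ∧ IsDomSet G (S : Set V)}

/-- The connected domination number `γ_c(G)`. -/
noncomputable def cdomNum (G : SimpleGraph V) : ℕ :=
  sInf {n | ∃ S : Finset V, S.card = n ∧ IsCDS G (S : Set V)}

/-- The lexicographic product `G ∘ H`. -/
def lexProd (G : SimpleGraph α) (H : SimpleGraph β) : SimpleGraph (α × β) where
  Adj x y := G.Adj x.1 y.1 ∨ (x.1 = y.1 ∧ H.Adj x.2 y.2)
  symm := by
    constructor
    rintro ⟨a, b⟩ ⟨c, d⟩ (h | ⟨h1, h2⟩)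
    · exact Or.inl h.symm
    · exact Or.inr ⟨h1.symm, h2.symm⟩
  loopless := by
    constructor
    rintro ⟨a, b⟩ (h | ⟨-, h⟩)
    · exact G.loopless.irrefl a h
    · exact H.loopless.irrefl b h

/-- The tensor (direct) product `G × H`. -/
def tensorProd (G : SimpleGraph α) (H : SimpleGraph β) : SimpleGraph (α × β) where
  Adj x y := G.Adj x.1 y.1 ∧ H.Adj x.2 y.2
  symm := ⟨fun _ _ ⟨h1, h2⟩ => ⟨h1.symm, h2.symm⟩⟩
  loopless := ⟨fun x ⟨h1, _⟩ => G.loopless.irrefl x.1 h1⟩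

/-- A vertex `v` is universal in `G`. -/
def IsUniversal (G : SimpleGraph V) (v : V) : Prop := ∀ w, w ≠ v → G.Adj v w

/-- The join of a single vertex (`none`) with the graph `G` (on `some` vertices). -/
def coneGraph (G : SimpleGraph α) : SimpleGraph (Option α) where
  Adj x y := match x, y with
    | none, none => False
    | none, some _ => True
    | some _, none => True
    | some a, some b => G.Adj a b
  symm := by constructor; rintro (_ | a) (_ | b) h <;> first | trivial | exact h.symm
  loopless := by constructor; rintro (_ | a) h <;> first | trivial | exact G.loopless.irrefl a h

/-- The wheel `W_n`: the join of a single vertex with the cycle `C_n`. -/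
def wheelGraph (n : ℕ) : SimpleGraph (Option (Fin n)) := coneGraph (cycleGraph n)

/-- The fan `F_n`: the join of a single vertex with the path `P_n`. -/
def fanGraph (n : ℕ) : SimpleGraph (Option (Fin n)) := coneGraph (pathGraph n)

section BoxProduct

variable {G : SimpleGraph α} {H : SimpleGraph β}

def induceProdIso (s : Set α) (t : Set β) :
    (G □ H).induce (s ×ˢ t) ≃g G.induce s □ H.induce t where
  toEquiv := Equiv.Set.prod s t
  map_rel_iff' := by
    rintro ⟨⟨a, b⟩, _⟩ ⟨⟨c, d⟩, _⟩
    simp only [comap_adj, boxProd_adj, Subtype.ext_iff]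
    rfl

lemma connected_induce_prod {s : Set α} {t : Set β} (hs : (G.induce s).Connected)
    (ht : (H.induce t).Connected) : ((G □ H).induce (s ×ˢ t)).Connected :=
  (induceProdIso s t).connected_iff.mpr (hs.boxProd ht)

/-- If `v` forces `w` in `H`, then `(g, v)` forces `(g, w)`: the other neighbours of `(g, v)`
lie in the fibre over `v` or over the other neighbours of `v`. -/
lemma monitored_boxProd_of_forced {D : Set α} {T : Set β} (hD : IsDomSet G D) {t : β}
    (ht : Forced H T t) (g : α) : Monitored (G □ H) (D ×ˢ T) (g, t) := by
  induction ht generalizing g with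
  | mem ht =>
    obtain ⟨d, hd, rfl | hdg⟩ := hD g
    · exact .mem ⟨hd, ht⟩
    · exact .dom ⟨hd, ht⟩ (boxProd_adj_left.mpr hdg)
  | force _ hvw _ ihv ihothers =>
    refine .prop (ihv g) (boxProd_adj_right.mpr hvw) ?_
    rintro ⟨h, u⟩ hadj hne
    rcases hadj with ⟨-, rfl⟩ | ⟨hvu, rfl⟩
    · exact ihv h
    · exact ihothers u hvu (fun huw => hne (by rw [huw])) g

lemma isPDS_boxProd {D : Set α} {T : Set β} (hD : IsDomSet G D) (hT : IsZFS H T) :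
    IsPDS (G □ H) (D ×ˢ T) :=
  fun ⟨g, t⟩ => monitored_boxProd_of_forced hD (hT t) g

lemma isCPDS_boxProd {D : Set α} {T : Set β} (hD : IsCDS G D) (hT : IsCZFS H T) :
    IsCPDS (G □ H) (D ×ˢ T) :=
  ⟨isPDS_boxProd hD.1 hT.1, connected_induce_prod hD.2 hT.2⟩

end BoxProduct

lemma cpdn_le_card {G : SimpleGraph V} {S : Finset V} (hS : IsCPDS G S) : cpdn G ≤ S.card :=
  Nat.sInf_le ⟨S, rfl, hS⟩

lemma isCDS_univ {G : SimpleGraph V} (hG : G.Connected) : IsCDS G Set.univ :=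
  ⟨fun v => ⟨v, trivial, .inl rfl⟩, (induceUnivIso G).connected_iff.mpr hG⟩

lemma exists_isCDS_card_eq_cdomNum [Fintype V] {G : SimpleGraph V} (hG : G.Connected) :
    ∃ D : Finset V, IsCDS G D ∧ D.card = cdomNum G := by
  obtain ⟨D, hcard, hD⟩ := Nat.sInf_mem (s := {m | ∃ S : Finset V, S.card = m ∧ IsCDS G S})
    ⟨_, Finset.univ, rfl, by simpa using isCDS_univ hG⟩
  exact ⟨D, hD, hcard⟩

theorem cpdn_boxProd_le_cdomNum_mul [Fintype α] {G : SimpleGraph α} {H : SimpleGraph β}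
    (hG : G.Connected) {T : Finset β} (hT : IsCZFS H T) :
    cpdn (G □ H) ≤ cdomNum G * T.card := by
  obtain ⟨D, hD, hcard⟩ := exists_isCDS_card_eq_cdomNum hG
  calc cpdn (G □ H) ≤ (D ×ˢ T).card :=
        cpdn_le_card (by rw [Finset.coe_product]; exact isCPDS_boxProd hD hT)
    _ = cdomNum G * T.card := by rw [Finset.card_product, hcard]

/-- The `k`-th path vertex forces the `(k+1)`-st: its other neighbours are the apex and the
`(k-1)`-st path vertex. -/
lemma isZFS_fanGraph (n : ℕ) : IsZFS (fanGraph (n + 1)) {none, some 0} := by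
  have hpath : ∀ k, ∀ j : Fin (n + 1), j.val ≤ k →
      Forced (fanGraph (n + 1)) {none, some 0} (some j) := by
    intro k
    induction k with
    | zero =>
      intro j hj
      obtain rfl : j = 0 := Fin.ext (Nat.le_zero.mp hj)
      exact .mem (.inr rfl)
    | succ k ih =>
      intro j hj
      rcases Nat.lt_or_ge j.val (k + 1) with hjk | hjk
      · exact ih j (by omega)
      · obtain ⟨v, hv⟩ : ∃ v : Fin (n + 1), v.val = k := ⟨⟨k, by omega⟩, rfl⟩
        refine .force (v := some v) (ih v hv.le) (pathGraph_adj.mpr (.inl (by omega))) ?_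
        rintro (_ | m) hadj hne
        · exact .mem (.inl rfl)
        · rcases pathGraph_adj.mp hadj with h | h
          · exact absurd (congrArg some (Fin.ext (by omega))) hne
          · exact ih m (by omega)
  rintro (_ | j)
  · exact .mem (.inl rfl)
  · exact hpath j j le_rfl

lemma isCZFS_fanGraph (n : ℕ) : IsCZFS (fanGraph (n + 1)) {none, some 0} :=
  ⟨isZFS_fanGraph n, induce_pair_connected_of_adj trivial⟩

theorem stmt_8_general {α : Type*} [Fintype α]
    (G : SimpleGraph α) (hG : G.Connected)
    (n : ℕ) (hn : 3 ≤ n) :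
    cpdn (G □ fanGraph n) ≤ 2 * cdomNum G := by
  obtain ⟨m, rfl⟩ : ∃ m, n = m + 1 := ⟨n - 1, by omega⟩
  have hT : IsCZFS (fanGraph (m + 1)) ↑({none, some 0} : Finset (Option (Fin (m + 1)))) := by
    simpa using isCZFS_fanGraph m
  simpa [mul_comm] using cpdn_boxProd_le_cdomNum_mul hG hT

/-- `γ_{P,c}(G □ F_n) ≤ 2·γ_c(G)`. -/
theorem stmt_8 {α : Type*} [Fintype α]
    (G : SimpleGraph α) (hG : G.Connected)
    (hGcard : 3 ≤ Fintype.card α)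
    (n : ℕ) (hn : 3 ≤ n) :
    cpdn (G □ fanGraph n) ≤ 2 * cdomNum G :=
  stmt_8_general G hG n hn
end

section
/- For integers 2 ≤ m ≤ n, the connected power domination number of the Cartesian product of complete graphs satisfies γ_{P,c}(K_m □ K_n) = m − 1. -/
open SimpleGraph

variable {V : Type*} {α β : Type*}

/-!
A column of `K_m` minus one vertex is a clique that dominates all rows but one, and the
missing row is then forced column by column, so `γ_{P,c} ≤ m - 1`. Conversely, if `|S| ≤ m - 2`
then at least two rows and two columns miss `S`, and the union of the rows and columns meeting
`S` is closed under propagation; a vertex in a row and a column both missing `S` is never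
monitored, so even `γ_P ≥ m - 1`.
-/

namespace SimpleGraph

theorem IsClique.connected_induce {V : Type*} {G : SimpleGraph V} {s : Set V}
    (hs : G.IsClique s) (hne : s.Nonempty) : (G.induce s).Connected := by
  have : Nonempty s := hne.to_subtype
  rw [induce_eq_top.mpr hs]
  exact connected_top

end SimpleGraph

theorem cpdn_eq_of_isCPDS {V : Type*} {G : SimpleGraph V} {k : ℕ} (S : Finset V)
    (hS : IsCPDS G S) (hcard : S.card = k) (hle : ∀ T : Finset V, IsCPDS G T → k ≤ T.card) :
    cpdn G = k :=
  le_antisymm (Nat.sInf_le ⟨S, hcard, hS⟩) (le_csInf ⟨k, S, hcard, hS⟩ (by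
    rintro _ ⟨T, rfl, hT⟩
    exact hle T hT))

theorem exists_ne_notMem_of_card_add_one_lt {γ : Type*} [Fintype γ] [DecidableEq γ]
    {s : Finset γ} (hs : s.card + 1 < Fintype.card γ) (a : γ) : ∃ x, x ≠ a ∧ x ∉ s := by
  obtain ⟨x, -, hx⟩ := Finset.exists_mem_notMem_of_card_lt_card
    ((Finset.card_insert_le a s).trans_lt (hs.trans_eq Finset.card_univ.symm))
  exact ⟨x, fun h => hx (by simp [h]), fun h => hx (by simp [h])⟩

section RookGraph

variable {α β : Type*}

theorem top_boxProd_top_adj {x y : α × β} :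
    ((⊤ : SimpleGraph α) □ (⊤ : SimpleGraph β)).Adj x y ↔
      x.1 ≠ y.1 ∧ x.2 = y.2 ∨ x.2 ≠ y.2 ∧ x.1 = y.1 := by
  simp [boxProd_adj]

/-- The column `b` minus `(r, b)` dominates every row but `r`; then each `(r, c)` is the only
unmonitored neighbour of `(i, c)`. -/
theorem isCPDS_top_boxProd_top_column {r i : α} (hi : i ≠ r) (b : β) :
    IsCPDS ((⊤ : SimpleGraph α) □ (⊤ : SimpleGraph β)) ({r}ᶜ ×ˢ {b}) := by
  have hdom : ∀ v : α × β, v.1 ≠ r →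
      Monitored ((⊤ : SimpleGraph α) □ (⊤ : SimpleGraph β)) ({r}ᶜ ×ˢ {b}) v := by
    rintro ⟨a, c⟩ ha
    by_cases hc : c = b
    · exact .mem (by simp [ha, hc])
    · exact .dom (v := (a, b)) (by simp [ha]) (top_boxProd_top_adj.mpr (.inr ⟨Ne.symm hc, rfl⟩))
  refine ⟨fun v => ?_, ?_⟩
  · obtain ⟨a, c⟩ := v
    by_cases ha : a = r
    · subst ha
      refine .prop (hdom (i, c) hi) (top_boxProd_top_adj.mpr (.inl ⟨hi, rfl⟩)) ?_
      rintro ⟨a', c'⟩ hadj hne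
      rcases top_boxProd_top_adj.mp hadj with ⟨-, rfl⟩ | ⟨-, rfl⟩
      · exact hdom _ fun h => hne (Prod.ext h rfl)
      · exact hdom _ hi
    · exact hdom _ ha
  · refine SimpleGraph.IsClique.connected_induce ?_ ⟨(i, b), by simp [hi]⟩
    rintro ⟨a, c⟩ ⟨-, hc : c = b⟩ ⟨a', c'⟩ ⟨-, hc' : c' = b⟩ hne
    subst hc hc'
    exact top_boxProd_top_adj.mpr (.inl ⟨fun h => hne (Prod.ext h rfl), rfl⟩)

variable [Fintype α] [Fintype β]

/-- Propagation cannot leave the union of the rows `R` and columns `C`: a vertex of it next to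
a vertex `w` outside it has a second neighbour outside it, in the line through `w` and a
row (or column) missed by `R` (or `C`) other than that of `w`. -/
theorem Monitored.mem_rows_or_mem_columns [DecidableEq α] [DecidableEq β]
    {T : Set (α × β)} {R : Finset α} {C : Finset β} (hT : ∀ v ∈ T, v.1 ∈ R ∧ v.2 ∈ C)
    (hR : R.card + 1 < Fintype.card α) (hC : C.card + 1 < Fintype.card β) {v : α × β}
    (hv : Monitored ((⊤ : SimpleGraph α) □ (⊤ : SimpleGraph β)) T v) : v.1 ∈ R ∨ v.2 ∈ C := by
  induction hv with
  | mem h => exact .inl (hT _ h).1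
  | dom h hadj =>
    rcases top_boxProd_top_adj.mp hadj with ⟨-, h2⟩ | ⟨-, h1⟩
    · exact .inr (h2 ▸ (hT _ h).2)
    · exact .inl (h1 ▸ (hT _ h).1)
  | @prop v w _ hadj _ ihv ihothers =>
    by_contra! hw
    rcases top_boxProd_top_adj.mp hadj with ⟨-, h2⟩ | ⟨-, h1⟩
    · have hv1 : v.1 ∈ R := ihv.resolve_right (h2 ▸ hw.2)
      obtain ⟨x, hxw, hxR⟩ := exists_ne_notMem_of_card_add_one_lt hR w.1
      have hx := ihothers (x, v.2)
        (top_boxProd_top_adj.mpr (.inl ⟨fun h : v.1 = x => hxR (h ▸ hv1), rfl⟩))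
        fun h => hxw (congrArg Prod.fst h)
      exact hx.elim hxR (h2 ▸ hw.2)
    · have hv2 : v.2 ∈ C := ihv.resolve_left (h1 ▸ hw.1)
      obtain ⟨y, hyw, hyC⟩ := exists_ne_notMem_of_card_add_one_lt hC w.2
      have hy := ihothers (v.1, y)
        (top_boxProd_top_adj.mpr (.inr ⟨fun h : v.2 = y => hyC (h ▸ hv2), rfl⟩))
        fun h => hyw (congrArg Prod.snd h)
      exact hy.elim (h1 ▸ hw.1) hyC

theorem card_sub_one_le_of_isPDS_top_boxProd_top [DecidableEq α] [DecidableEq β]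
    (hαβ : Fintype.card α ≤ Fintype.card β) {S : Finset (α × β)}
    (hS : IsPDS ((⊤ : SimpleGraph α) □ (⊤ : SimpleGraph β)) S) :
    Fintype.card α - 1 ≤ S.card := by
  by_contra! hlt
  have hR : (S.image Prod.fst).card + 1 < Fintype.card α := by
    have := S.card_image_le (f := Prod.fst); omega
  have hC : (S.image Prod.snd).card + 1 < Fintype.card β := by
    have := S.card_image_le (f := Prod.snd); omega
  obtain ⟨a, -, ha⟩ := Finset.exists_mem_notMem_of_card_lt_card
    (s := S.image Prod.fst) (t := Finset.univ) (by rw [Finset.card_univ]; omega)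
  obtain ⟨b, -, hb⟩ := Finset.exists_mem_notMem_of_card_lt_card
    (s := S.image Prod.snd) (t := Finset.univ) (by rw [Finset.card_univ]; omega)
  have hST : ∀ v ∈ (S : Set (α × β)), v.1 ∈ S.image Prod.fst ∧ v.2 ∈ S.image Prod.snd :=
    fun v hv => ⟨Finset.mem_image_of_mem _ hv, Finset.mem_image_of_mem _ hv⟩
  exact ((hS (a, b)).mem_rows_or_mem_columns hST hR hC).elim ha hb

end RookGraph

/-- `γ_{P,c}(K_m □ K_n) = m - 1` for `2 ≤ m ≤ n`. -/
theorem stmt_9 (m n : ℕ) (hm : 2 ≤ m) (hmn : m ≤ n) :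
    cpdn ((⊤ : SimpleGraph (Fin m)) □ (⊤ : SimpleGraph (Fin n))) = m - 1 := by
  have : NeZero m := ⟨by omega⟩
  have : NeZero n := ⟨by omega⟩
  have h10 : (⟨1, hm⟩ : Fin m) ≠ 0 := Fin.ne_of_val_ne one_ne_zero
  refine cpdn_eq_of_isCPDS (Finset.univ.erase 0 ×ˢ {0}) ?_ ?_ fun T hT => ?_
  · rw [Finset.coe_product, Finset.coe_erase, Finset.coe_univ, Finset.coe_singleton,
      ← Set.compl_eq_univ_sdiff]
    exact isCPDS_top_boxProd_top_column h10 0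
  · simp
  · simpa using card_sub_one_le_of_isPDS_top_boxProd_top (by simpa using hmn) hT.1
end
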